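/- Let Ω ⊂ ℝⁿ be a bounded connected open set whose signed distance function d is C² on a neighborhood of ∂Ω. Assume condition (reg2) (β-Hölder continuity of σ with β ∈ (1/2,1]) and condition (irrelevant). Then for every κ > 0 and every M > 0 there exists δ > 0 such that for all x ∈ Ω_δ one has F[d^{−κ}](x) ≥ M, i.e. sup_{α∈A} ( κ d(x)^{−κ−1} b(x,α)·Dd(x) + κ d(x)^{−κ−1} tr(a(x,α)D²d(x)) − κ(κ+1) d(x)^{−κ−2} |σ(x,α)ᵀ Dd(x)|² ) ≥ M. -/

import Mathlib

/-!
Near a boundary point `z`, the control `α₀` given by (irrelevant) switches off the diffusion in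
the normal direction: `σ(z,α₀)ᵀ Dd(z) = 0`. Take `z` a nearest boundary point of `x`, so that
`d = d(x) = |x - z|`. Hölder continuity of `σ` and the Lipschitz bound for `Dd` on a compact
collar of `∂Ω` give `|σ(x,α₀)ᵀ Dd(x)| ≤ C d^β`. At `α₀` the drift term is therefore at least
`κ k d^(γ-κ-1)` and the diffusion penalty at most `κ(κ+1) C² d^(2β-κ-2)`; as `γ < 2β - 1` the
drift term dominates and blows up when `d → 0`.
-/

open scoped InnerProductSpace Matrix
open Filter

noncomputable section

/-- The signed distance to the boundary of `Ω`:
`d(x) = dist(x, Ωᶜ) - dist(x, closure Ω)`. -/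
def sdist {n : ℕ} (Ω : Set (EuclideanSpace ℝ (Fin n))) (x : EuclideanSpace ℝ (Fin n)) : ℝ :=
  Metric.infDist x Ωᶜ - Metric.infDist x (closure Ω)

/-- The distance to the topological boundary of `Ω`. -/
def bdist {n : ℕ} (Ω : Set (EuclideanSpace ℝ (Fin n))) (x : EuclideanSpace ℝ (Fin n)) : ℝ :=
  Metric.infDist x (frontier Ω)

/-- The Frobenius (Euclidean) norm of a matrix. -/
def mnorm {n r : ℕ} (M : Matrix (Fin n) (Fin r) ℝ) : ℝ :=
  Real.sqrt (∑ i, ∑ j, M i j ^ 2)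

/-- The quadratic form `v ↦ v ⬝ X v`. -/
def quadForm {n : ℕ} (X : Matrix (Fin n) (Fin n) ℝ) (v : EuclideanSpace ℝ (Fin n)) : ℝ :=
  ∑ i, ∑ j, X i j * v i * v j

/-- `Mᵀ v` as a vector in `ℝʳ` (used for `σ(x,α)ᵀ Dd(x)`). -/
def sigmaT {n r : ℕ} (M : Matrix (Fin n) (Fin r) ℝ) (v : EuclideanSpace ℝ (Fin n)) :
    Fin r → ℝ :=
  Matrix.mulVec Mᵀ (fun i => v i)

/-- The second-order superjet of `u` at `x` relative to `S`. -/
def J2plus {n : ℕ} (S : Set (EuclideanSpace ℝ (Fin n))) (u : EuclideanSpace ℝ (Fin n) → ℝ)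
    (x : EuclideanSpace ℝ (Fin n)) :
    Set (EuclideanSpace ℝ (Fin n) × Matrix (Fin n) (Fin n) ℝ) :=
  { pX | pX.2.IsSymm ∧ ∀ ε > (0 : ℝ), ∀ᶠ y in nhdsWithin x S,
      u y - u x - ⟪pX.1, y - x⟫_ℝ - (1 / 2) * quadForm pX.2 (y - x) ≤ ε * ‖y - x‖ ^ 2 }

/-- The second-order subjet of `u` at `x` relative to `S`: `J^{2,-}u = -J^{2,+}(-u)`. -/
def J2minus {n : ℕ} (S : Set (EuclideanSpace ℝ (Fin n))) (u : EuclideanSpace ℝ (Fin n) → ℝ)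
    (x : EuclideanSpace ℝ (Fin n)) :
    Set (EuclideanSpace ℝ (Fin n) × Matrix (Fin n) (Fin n) ℝ) :=
  { qZ | (-qZ.1, -qZ.2) ∈ J2plus S (fun y => -u y) x }

/-- The first-order superdifferential of `u` at `x` relative to `S`. -/
def D1plus {n : ℕ} (S : Set (EuclideanSpace ℝ (Fin n))) (u : EuclideanSpace ℝ (Fin n) → ℝ)
    (x : EuclideanSpace ℝ (Fin n)) : Set (EuclideanSpace ℝ (Fin n)) :=
  { q | ∀ ε > (0 : ℝ), ∀ᶠ y in nhdsWithin x S, u y - u x - ⟪q, y - x⟫_ℝ ≤ ε * ‖y - x‖ }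

/-- The Bellman operator `F(x,p,X) = sup_{α ∈ A} (-b(x,α)·p - tr(σσᵀ X))`. -/
def Fop {n m r : ℕ} (A : Set (Fin m → ℝ))
    (b : EuclideanSpace ℝ (Fin n) → (Fin m → ℝ) → EuclideanSpace ℝ (Fin n))
    (σ : EuclideanSpace ℝ (Fin n) → (Fin m → ℝ) → Matrix (Fin n) (Fin r) ℝ)
    (x p : EuclideanSpace ℝ (Fin n)) (X : Matrix (Fin n) (Fin n) ℝ) : ℝ :=
  sSup ((fun α => -⟪b x α, p⟫_ℝ - Matrix.trace (σ x α * (σ x α)ᵀ * X)) '' A)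

/-- The Hamiltonian `H(x,p,X) = sup_{α ∈ A} (-b(x,α)·p - tr(σσᵀ X) - l(x,α))`. -/
def Hop {n m r : ℕ} (A : Set (Fin m → ℝ))
    (b : EuclideanSpace ℝ (Fin n) → (Fin m → ℝ) → EuclideanSpace ℝ (Fin n))
    (σ : EuclideanSpace ℝ (Fin n) → (Fin m → ℝ) → Matrix (Fin n) (Fin r) ℝ)
    (l : EuclideanSpace ℝ (Fin n) → (Fin m → ℝ) → ℝ)
    (x p : EuclideanSpace ℝ (Fin n)) (X : Matrix (Fin n) (Fin n) ℝ) : ℝ :=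
  sSup ((fun α => -⟪b x α, p⟫_ℝ - Matrix.trace (σ x α * (σ x α)ᵀ * X) - l x α) '' A)

/-- The set of projections of `x` onto `∂Ω`. -/
def projSet {n : ℕ} (Ω : Set (EuclideanSpace ℝ (Fin n))) (x : EuclideanSpace ℝ (Fin n)) :
    Set (EuclideanSpace ℝ (Fin n)) :=
  { z | z ∈ frontier Ω ∧ dist x z = bdist Ω x }

/-- The interior normal directions at a boundary point `z`. -/
def normalDirs {n : ℕ} (Ω : Set (EuclideanSpace ℝ (Fin n))) (z : EuclideanSpace ℝ (Fin n)) :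
    Set (EuclideanSpace ℝ (Fin n)) :=
  { ν | ‖ν‖ = 1 ∧ ∃ x ∈ Ω, x = z + bdist Ω x • ν }


section FrobeniusNorm

attribute [local instance] Matrix.frobeniusNormedAddCommGroup

variable {n r : ℕ}

lemma mnorm_eq_norm {k : ℕ} (M : Matrix (Fin n) (Fin k) ℝ) : mnorm M = ‖M‖ := by
  simp [mnorm, Matrix.frobenius_norm_def, Real.sqrt_eq_rpow]

lemma mnorm_nonneg {k : ℕ} (M : Matrix (Fin n) (Fin k) ℝ) : 0 ≤ mnorm M :=
  Real.sqrt_nonneg _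

lemma mnorm_transpose {k : ℕ} (M : Matrix (Fin n) (Fin k) ℝ) : mnorm Mᵀ = mnorm M := by
  simp only [mnorm_eq_norm, Matrix.frobenius_norm_transpose]

lemma mnorm_mul_le {k : ℕ} (P : Matrix (Fin n) (Fin k) ℝ) (Q : Matrix (Fin k) (Fin r) ℝ) :
    mnorm (P * Q) ≤ mnorm P * mnorm Q := by
  simpa only [mnorm_eq_norm] using Matrix.frobenius_norm_mul P Q

lemma norm_toLp_sigmaT_le (M : Matrix (Fin n) (Fin r) ℝ) (v : EuclideanSpace ℝ (Fin n)) :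
    ‖WithLp.toLp 2 (sigmaT M v)‖ ≤ mnorm M * ‖v‖ := by
  rw [← Matrix.frobenius_norm_replicateCol (ι := Unit), sigmaT, Matrix.replicateCol_mulVec,
    ← mnorm_transpose, mnorm_eq_norm]
  calc _ ≤ ‖Mᵀ‖ * ‖Matrix.replicateCol Unit (fun i => v i)‖ := Matrix.frobenius_norm_mul _ _
    _ = ‖Mᵀ‖ * ‖v‖ := by rw [Matrix.frobenius_norm_replicateCol]

end FrobeniusNorm

lemma abs_trace_mul_le {n : ℕ} (P Q : Matrix (Fin n) (Fin n) ℝ) :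
    |Matrix.trace (P * Q)| ≤ mnorm P * mnorm Q := by
  have htrace : Matrix.trace (P * Q) = ∑ p : Fin n × Fin n, P p.1 p.2 * Q p.2 p.1 := by
    simp [Matrix.trace, Matrix.mul_apply, Fintype.sum_prod_type]
  have hQ : ∑ p : Fin n × Fin n, Q p.2 p.1 ^ 2 = ∑ i, ∑ j, Q i j ^ 2 := by
    rw [Fintype.sum_prod_type, Finset.sum_comm]
  rw [htrace, mnorm, mnorm, ← Real.sqrt_mul (by positivity), ← Real.sqrt_sq_eq_abs,
    ← Fintype.sum_prod_type', ← hQ]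
  exact Real.sqrt_le_sqrt (Finset.sum_mul_sq_le_sq_mul_sq _ _ _)

lemma trace_mul_transpose_mul_le {n r : ℕ} (S : Matrix (Fin n) (Fin r) ℝ)
    (X : Matrix (Fin n) (Fin n) ℝ) : Matrix.trace (S * Sᵀ * X) ≤ mnorm S ^ 2 * mnorm X :=
  calc Matrix.trace (S * Sᵀ * X) ≤ mnorm (S * Sᵀ) * mnorm X :=
        (le_abs_self _).trans (abs_trace_mul_le _ _)
    _ ≤ mnorm S * mnorm Sᵀ * mnorm X := by gcongr; exacts [mnorm_nonneg _, mnorm_mul_le _ _]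
    _ = mnorm S ^ 2 * mnorm X := by rw [mnorm_transpose, sq]

lemma sigmaT_sub_left {n r : ℕ} (M N : Matrix (Fin n) (Fin r) ℝ) (v : EuclideanSpace ℝ (Fin n)) :
    sigmaT (M - N) v = sigmaT M v - sigmaT N v := by
  simp only [sigmaT, Matrix.transpose_sub, Matrix.sub_mulVec]

lemma sigmaT_sub_right {n r : ℕ} (M : Matrix (Fin n) (Fin r) ℝ)
    (v w : EuclideanSpace ℝ (Fin n)) : sigmaT M (v - w) = sigmaT M v - sigmaT M w := by
  simp only [sigmaT, ← Matrix.mulVec_sub]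
  rfl

lemma sum_sigmaT_sq_le_of_sigmaT_eq_zero {n r : ℕ} {M N : Matrix (Fin n) (Fin r) ℝ}
    {v w : EuclideanSpace ℝ (Fin n)} (h : sigmaT N w = 0) :
    ∑ j, sigmaT M v j ^ 2 ≤ (mnorm (M - N) * ‖v‖ + mnorm N * ‖v - w‖) ^ 2 := by
  have hsplit : sigmaT M v = sigmaT (M - N) v + sigmaT N (v - w) := by
    rw [sigmaT_sub_left, sigmaT_sub_right, h]
    abel
  have hnorm : ∑ j, sigmaT M v j ^ 2 = ‖WithLp.toLp 2 (sigmaT M v)‖ ^ 2 := by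
    simp [EuclideanSpace.real_norm_sq_eq]
  rw [hnorm, hsplit, WithLp.toLp_add]
  gcongr
  exact (norm_add_le _ _).trans (add_le_add (norm_toLp_sigmaT_le _ _) (norm_toLp_sigmaT_le _ _))

section SignedDistance

open Metric

variable {n : ℕ} {Ω : Set (EuclideanSpace ℝ (Fin n))}

lemma lipschitzWith_sdist (Ω : Set (EuclideanSpace ℝ (Fin n))) : LipschitzWith 2 (sdist Ω) := by
  have h := (lipschitz_infDist_pt Ωᶜ).sub (lipschitz_infDist_pt (closure Ω))
  norm_num at h
  exact h

lemma sdist_of_mem {x : EuclideanSpace ℝ (Fin n)} (hx : x ∈ Ω) : sdist Ω x = infDist x Ωᶜ := by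
  rw [sdist, infDist_zero_of_mem (subset_closure hx), sub_zero]

lemma sdist_eq_zero_of_mem_frontier {z : EuclideanSpace ℝ (Fin n)} (hz : z ∈ frontier Ω) :
    sdist Ω z = 0 := by
  rw [frontier_eq_closure_inter_closure] at hz
  rw [sdist, ← infDist_closure (s := Ωᶜ), infDist_zero_of_mem hz.1, infDist_zero_of_mem hz.2,
    sub_zero]

lemma abs_sdist_le_two_mul_dist {z : EuclideanSpace ℝ (Fin n)} (hz : z ∈ frontier Ω)
    (y : EuclideanSpace ℝ (Fin n)) : |sdist Ω y| ≤ 2 * dist y z := by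
  simpa [sdist_eq_zero_of_mem_frontier hz, Real.dist_eq] using
    (lipschitzWith_sdist Ω).dist_le_mul y z

lemma sdist_univ : sdist (Set.univ : Set (EuclideanSpace ℝ (Fin n))) = 0 := by
  ext x
  simp [sdist, infDist_zero_of_mem (Set.mem_univ x)]

lemma ne_univ_of_hasGradientAt_sdist {x g : EuclideanSpace ℝ (Fin n)}
    (h : HasGradientAt (sdist Ω) g x) (hg : g ≠ 0) : Ω ≠ Set.univ := by
  rintro rfl
  rw [sdist_univ] at h
  exact hg (h.unique (hasGradientAt_const x 0))

lemma sdist_pos (hΩ : IsOpen Ω) (hne : Ω ≠ Set.univ) {x : EuclideanSpace ℝ (Fin n)}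
    (hx : x ∈ Ω) : 0 < sdist Ω x := by
  rw [sdist_of_mem hx]
  exact (hΩ.isClosed_compl.notMem_iff_infDist_pos (Set.nonempty_compl.mpr hne)).mp
    (Set.notMem_compl_iff.mpr hx)

lemma exists_mem_frontier_dist_eq_sdist (hne : Ω ≠ Set.univ) {x : EuclideanSpace ℝ (Fin n)}
    (hx : x ∈ Ω) : ∃ z ∈ frontier Ω, dist x z = sdist Ω x := by
  obtain ⟨z, hz, hxz⟩ := exists_mem_frontier_infDist_compl_eq_dist hx hne
  exact ⟨z, hz, by rw [sdist_of_mem hx, hxz]⟩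

lemma segment_subset_closure_of_dist_eq_sdist {x z : EuclideanSpace ℝ (Fin n)} (hx : x ∈ Ω)
    (hxz : dist x z = sdist Ω x) : segment ℝ z x ⊆ closure Ω := by
  refine (segment_subset_closedBall_right z x).trans ?_
  rw [dist_comm, hxz, sdist_of_mem hx]
  exact closedBall_infDist_compl_subset_closure hx

lemma isCompact_closure_inter_abs_sdist_le (hΩ : Bornology.IsBounded Ω) (ε : ℝ) :
    IsCompact (closure Ω ∩ {y | |sdist Ω y| ≤ ε}) :=
  isCompact_of_isClosed_isBounded
    (isClosed_closure.inter (isClosed_le (lipschitzWith_sdist Ω).continuous.abs continuous_const))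
    (hΩ.closure.subset Set.inter_subset_left)

end SignedDistance

lemma exists_norm_sub_le_mul_sdist {n : ℕ} {F : Type*} [NormedAddCommGroup F] [NormedSpace ℝ F]
    {Ω : Set (EuclideanSpace ℝ (Fin n))} (hΩ : Bornology.IsBounded Ω) {δ₀ : ℝ} (hδ₀ : 0 < δ₀)
    {f : EuclideanSpace ℝ (Fin n) → F}
    {f' : EuclideanSpace ℝ (Fin n) → EuclideanSpace ℝ (Fin n) →L[ℝ] F}
    (hf : ∀ x, |sdist Ω x| < δ₀ → HasFDerivAt f (f' x) x)
    (hf' : ContinuousOn f' {x | |sdist Ω x| < δ₀}) :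
    ∃ L ≥ 0, ∀ x ∈ Ω, ∀ z ∈ frontier Ω, dist x z = sdist Ω x → 4 * sdist Ω x ≤ δ₀ →
      ‖f x - f z‖ ≤ L * sdist Ω x := by
  set K := closure Ω ∩ {y | |sdist Ω y| ≤ δ₀ / 2}
  have hK : K ⊆ {y | |sdist Ω y| < δ₀} := fun y hy => by
    have : |sdist Ω y| ≤ δ₀ / 2 := hy.2
    show |sdist Ω y| < δ₀
    linarith
  obtain ⟨L, hL⟩ := (isCompact_closure_inter_abs_sdist_le hΩ _).exists_bound_of_continuousOn
    (hf'.mono hK)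
  refine ⟨max L 0, le_max_right _ _, fun x hx z hz hxz hxδ => ?_⟩
  have hseg : segment ℝ z x ⊆ K := fun y hy => by
    refine ⟨segment_subset_closure_of_dist_eq_sdist hx hxz hy, ?_⟩
    have hyz : dist y z ≤ dist x z := by
      simpa [dist_comm] using segment_subset_closedBall_left z x hy
    have := abs_sdist_le_two_mul_dist hz y
    show |sdist Ω y| ≤ δ₀ / 2
    linarith
  rw [← hxz, dist_eq_norm]
  exact (convex_segment z x).norm_image_sub_le_of_norm_hasFDerivWithin_le
    (fun y hy => (hf y (hK (hseg hy))).hasFDerivWithinAt)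
    (fun y hy => (hL y (hseg hy)).trans (le_max_left _ _))
    (left_mem_segment ℝ z x) (right_mem_segment ℝ z x)

lemma continuous_toContinuousLinearMap_toEuclideanLin {n : ℕ} :
    Continuous fun M : Matrix (Fin n) (Fin n) ℝ =>
      LinearMap.toContinuousLinearMap (Matrix.toEuclideanLin M) :=
  LinearMap.continuous_of_finiteDimensional
    ((LinearMap.toContinuousLinearMap.toLinearMap.comp Matrix.toEuclideanLin.toLinearMap :
      Matrix (Fin n) (Fin n) ℝ →ₗ[ℝ] EuclideanSpace ℝ (Fin n) →L[ℝ] EuclideanSpace ℝ (Fin n)))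

lemma exists_pos_forall_le_mul_rpow_sub (M : ℝ) {a c e e' : ℝ} (ha : 0 < a) (he : e < 0)
    (hee' : e < e') : ∃ δ > 0, ∀ t, 0 < t → t < δ → M ≤ a * t ^ e - c * t ^ e' := by
  have hlim : Tendsto (fun t : ℝ => t ^ e * (a - c * t ^ (e' - e))) (nhdsWithin 0 (Set.Ioi 0))
      atTop := by
    refine (tendsto_rpow_neg_nhdsGT_zero he).atTop_mul_pos ha ?_
    have h0 : Tendsto (fun t : ℝ => t ^ (e' - e)) (nhdsWithin 0 (Set.Ioi 0)) (nhds 0) := by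
      have := (Real.continuousAt_rpow_const 0 (e' - e) (Or.inr (by linarith))).tendsto
      rw [Real.zero_rpow (by linarith)] at this
      exact this.mono_left nhdsWithin_le_nhds
    simpa using (h0.const_mul c).const_sub a
  obtain ⟨δ, hδ, hδM⟩ := (nhdsGT_basis (0 : ℝ)).eventually_iff.mp (hlim.eventually_ge_atTop M)
  refine ⟨δ, hδ, fun t ht htδ => (hδM ⟨ht, htδ⟩).trans_eq ?_⟩
  rw [mul_sub, ← mul_assoc, mul_comm _ c, mul_assoc, ← Real.rpow_add ht]
  ring_nf

lemma sum_sigmaT_sq_le_mul_rpow {n r : ℕ} {M N : Matrix (Fin n) (Fin r) ℝ}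
    {v w : EuclideanSpace ℝ (Fin n)} {B C L d β : ℝ} (h : sigmaT N w = 0) (hv : ‖v‖ = 1)
    (hMN : mnorm (M - N) ≤ B * d ^ β) (hN : mnorm N ≤ C) (hvw : ‖v - w‖ ≤ L * d)
    (hL : 0 ≤ L) (hd : 0 < d) (hd1 : d ≤ 1) (hβ : β ≤ 1) :
    ∑ j, sigmaT M v j ^ 2 ≤ (B + C * L) ^ 2 * d ^ (2 * β) := by
  have hC : 0 ≤ C := (mnorm_nonneg N).trans hN
  have hdβ : d ≤ d ^ β := by
    simpa using Real.rpow_le_rpow_of_exponent_ge hd hd1 hβ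
  calc ∑ j, sigmaT M v j ^ 2 ≤ (mnorm (M - N) * ‖v‖ + mnorm N * ‖v - w‖) ^ 2 :=
        sum_sigmaT_sq_le_of_sigmaT_eq_zero h
    _ ≤ (B * d ^ β + C * (L * d ^ β)) ^ 2 := by
        rw [hv, mul_one]
        gcongr
        · exact add_nonneg (mnorm_nonneg _) (mul_nonneg (mnorm_nonneg _) (norm_nonneg _))
        · exact hvw.trans (by gcongr)
    _ = (B + C * L) ^ 2 * d ^ (2 * β) := by
        rw [mul_comm 2 β, Real.rpow_mul hd.le, Real.rpow_two]
        ring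

lemma mul_rpow_sub_mul_rpow_le {d κ k γ β C P Q S : ℝ} (hd : 0 < d) (hκ : 0 < κ)
    (hPQ : k * d ^ γ ≤ P + Q) (hS : S ≤ C ^ 2 * d ^ (2 * β)) :
    κ * k * d ^ (γ - κ - 1) - κ * (κ + 1) * C ^ 2 * d ^ (2 * β - κ - 2) ≤
      κ * d ^ (-κ - 1) * P + κ * d ^ (-κ - 1) * Q - κ * (κ + 1) * d ^ (-κ - 2) * S := by
  have h₁ : d ^ (γ - κ - 1) = d ^ (-κ - 1) * d ^ γ := by
    rw [← Real.rpow_add hd]; ring_nf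
  have h₂ : d ^ (2 * β - κ - 2) = d ^ (-κ - 2) * d ^ (2 * β) := by
    rw [← Real.rpow_add hd]; ring_nf
  have hP : κ * d ^ (-κ - 1) * (k * d ^ γ) ≤ κ * d ^ (-κ - 1) * (P + Q) := by gcongr
  have hQ : κ * (κ + 1) * d ^ (-κ - 2) * S ≤
      κ * (κ + 1) * d ^ (-κ - 2) * (C ^ 2 * d ^ (2 * β)) := by
    gcongr
  rw [h₁, h₂]
  linarith

lemma bddAbove_image_of_bounded {n m r : ℕ} {A : Set (Fin m → ℝ)}
    (b : (Fin m → ℝ) → EuclideanSpace ℝ (Fin n)) (S : (Fin m → ℝ) → Matrix (Fin n) (Fin r) ℝ)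
    (v : EuclideanSpace ℝ (Fin n)) (X : Matrix (Fin n) (Fin n) ℝ) {p q Cb CS : ℝ}
    (hp : 0 ≤ p) (hq : 0 ≤ q) (hb : ∀ α ∈ A, ‖b α‖ ≤ Cb) (hS : ∀ α ∈ A, mnorm (S α) ≤ CS) :
    BddAbove ((fun α => p * ⟪b α, v⟫_ℝ + p * Matrix.trace (S α * (S α)ᵀ * X)
      - q * ∑ i, sigmaT (S α) v i ^ 2) '' A) := by
  refine ⟨p * (Cb * ‖v‖) + p * (CS ^ 2 * mnorm X), ?_⟩
  rintro _ ⟨α, hα, rfl⟩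
  have hbv : ⟪b α, v⟫_ℝ ≤ Cb * ‖v‖ :=
    (real_inner_le_norm _ _).trans (by gcongr; exact hb α hα)
  have htr : Matrix.trace (S α * (S α)ᵀ * X) ≤ CS ^ 2 * mnorm X :=
    (trace_mul_transpose_mul_le _ _).trans
      (by gcongr; exacts [mnorm_nonneg _, mnorm_nonneg _, hS α hα])
  have hsq : 0 ≤ q * ∑ i, sigmaT (S α) v i ^ 2 := by positivity
  dsimp only
  nlinarith [mul_le_mul_of_nonneg_left hbv hp, mul_le_mul_of_nonneg_left htr hp]

theorem statement_11_general
    {n m r : ℕ} (Ω : Set (EuclideanSpace ℝ (Fin n)))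
    (hΩo : IsOpen Ω) (hΩbdd : Bornology.IsBounded Ω)
    (A : Set (Fin m → ℝ))
    (b : EuclideanSpace ℝ (Fin n) → (Fin m → ℝ) → EuclideanSpace ℝ (Fin n))
    (σ : EuclideanSpace ℝ (Fin n) → (Fin m → ℝ) → Matrix (Fin n) (Fin r) ℝ)
    (hbBdd : ∃ C, ∀ x ∈ closure Ω, ∀ α ∈ A, ‖b x α‖ ≤ C)
    (hσBdd : ∃ C, ∀ x ∈ closure Ω, ∀ α ∈ A, mnorm (σ x α) ≤ C)
    (δ₀ : ℝ) (hδ₀ : 0 < δ₀)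
    (Dd : EuclideanSpace ℝ (Fin n) → EuclideanSpace ℝ (Fin n))
    (D2d : EuclideanSpace ℝ (Fin n) → Matrix (Fin n) (Fin n) ℝ)
    (hDd : ∀ x, |sdist Ω x| < δ₀ → HasGradientAt (sdist Ω) (Dd x) x)
    (hDdnorm : ∀ x, |sdist Ω x| < δ₀ → ‖Dd x‖ = 1)
    (hD2d : ∀ x, |sdist Ω x| < δ₀ →
      HasFDerivAt Dd (LinearMap.toContinuousLinearMap (Matrix.toEuclideanLin (D2d x))) x)
    (hD2dCont : ContinuousOn D2d {x | |sdist Ω x| < δ₀})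
    (β B : ℝ) (hβhigh : β ≤ 1)
    (hreg2 : ∀ x ∈ closure Ω, ∀ y ∈ closure Ω, ∀ α ∈ A,
      mnorm (σ x α - σ y α) ≤ B * ‖x - y‖ ^ β)
    (hirr : ∃ δ > (0 : ℝ), ∃ k > (0 : ℝ), ∃ γ : ℝ, γ < 2 * β - 1 ∧
      ∀ z ∈ frontier Ω, ∃ α₀ ∈ A, sigmaT (σ z α₀) (Dd z) = 0 ∧
        ∀ x ∈ Ω ∩ Metric.ball z δ,
          k * sdist Ω x ^ γ ≤
            ⟪b x α₀, Dd x⟫_ℝ + Matrix.trace (σ x α₀ * (σ x α₀)ᵀ * D2d x))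
    :
    ∀ κ > (0 : ℝ), ∀ M > (0 : ℝ), ∃ δ > (0 : ℝ), ∀ x ∈ Ω, sdist Ω x < δ →
      M ≤ sSup ((fun α =>
        κ * sdist Ω x ^ (-κ - 1) * ⟪b x α, Dd x⟫_ℝ
          + κ * sdist Ω x ^ (-κ - 1) * Matrix.trace (σ x α * (σ x α)ᵀ * D2d x)
          - κ * (κ + 1) * sdist Ω x ^ (-κ - 2) *
            (∑ i, sigmaT (σ x α) (Dd x) i ^ 2)) '' A) := by
  intro κ hκ M _
  have hne : Ω ≠ Set.univ := fun hΩ => by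
    have h0 : |sdist Ω 0| < δ₀ := by simpa [hΩ, sdist_univ] using hδ₀
    exact ne_univ_of_hasGradientAt_sdist (hDd 0 h0)
      (norm_ne_zero_iff.mp (by simp [hDdnorm 0 h0])) hΩ
  obtain ⟨δI, hδI, k, hk, γ, hγ, hirr⟩ := hirr
  obtain ⟨Cb, hCb⟩ := hbBdd
  obtain ⟨Cσ, hCσ⟩ := hσBdd
  obtain ⟨L, hL, hDdLip⟩ := exists_norm_sub_le_mul_sdist hΩbdd hδ₀ hD2d
    (continuous_toContinuousLinearMap_toEuclideanLin.comp_continuousOn hD2dCont)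
  obtain ⟨δ₁, hδ₁, hδ₁M⟩ := exists_pos_forall_le_mul_rpow_sub M (mul_pos hκ hk)
    (c := κ * (κ + 1) * (B + Cσ * L) ^ 2) (e := γ - κ - 1) (e' := 2 * β - κ - 2)
    (by linarith) (by linarith)
  refine ⟨min (min δI (δ₀ / 4)) (min 1 δ₁), by positivity, fun x hx hxδ => ?_⟩
  simp only [lt_min_iff] at hxδ
  obtain ⟨⟨hxδI, hxδ₀⟩, hx1, hxδ₁⟩ := hxδ
  have hd := sdist_pos hΩo hne hx
  have hxcl := subset_closure hx
  obtain ⟨z, hz, hxz⟩ := exists_mem_frontier_dist_eq_sdist hne hx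
  have hzcl := frontier_subset_closure hz
  obtain ⟨α₀, hα₀, hσz, hdrift⟩ := hirr z hz
  have hsq := sum_sigmaT_sq_le_mul_rpow hσz (hDdnorm x (by rw [abs_of_pos hd]; linarith))
    (by simpa [← dist_eq_norm, hxz] using hreg2 x hxcl z hzcl α₀ hα₀) (hCσ z hzcl α₀ hα₀)
    (hDdLip x hx z hz hxz (by linarith)) hL hd hx1.le hβhigh
  refine le_csSup_of_le (bddAbove_image_of_bounded (b x) (σ x) (Dd x) (D2d x)
    (by positivity) (by positivity) (hCb x hxcl) (hCσ x hxcl)) ⟨α₀, hα₀, rfl⟩ ?_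
  exact (hδ₁M _ hd hxδ₁).trans
    (mul_rpow_sub_mul_rpow_le hd hκ (hdrift x ⟨hx, by rwa [Metric.mem_ball, hxz]⟩) hsq)

theorem statement_11
    {n m r : ℕ} (Ω : Set (EuclideanSpace ℝ (Fin n)))
    (hΩo : IsOpen Ω) (hΩconn : IsConnected Ω) (hΩbdd : Bornology.IsBounded Ω)
    (A : Set (Fin m → ℝ)) (hA : IsClosed A) (hAne : A.Nonempty)
    (b : EuclideanSpace ℝ (Fin n) → (Fin m → ℝ) → EuclideanSpace ℝ (Fin n))
    (σ : EuclideanSpace ℝ (Fin n) → (Fin m → ℝ) → Matrix (Fin n) (Fin r) ℝ)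
    (hbBdd : ∃ C, ∀ x ∈ closure Ω, ∀ α ∈ A, ‖b x α‖ ≤ C)
    (hσBdd : ∃ C, ∀ x ∈ closure Ω, ∀ α ∈ A, mnorm (σ x α) ≤ C)
    (hbCont : ContinuousOn (fun q : EuclideanSpace ℝ (Fin n) × (Fin m → ℝ) => b q.1 q.2)
      (closure Ω ×ˢ A))
    (hσCont : ContinuousOn (fun q : EuclideanSpace ℝ (Fin n) × (Fin m → ℝ) => σ q.1 q.2)
      (closure Ω ×ˢ A))
    (δ₀ : ℝ) (hδ₀ : 0 < δ₀)
    (Dd : EuclideanSpace ℝ (Fin n) → EuclideanSpace ℝ (Fin n))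
    (D2d : EuclideanSpace ℝ (Fin n) → Matrix (Fin n) (Fin n) ℝ)
    (hDd : ∀ x, |sdist Ω x| < δ₀ → HasGradientAt (sdist Ω) (Dd x) x)
    (hDdnorm : ∀ x, |sdist Ω x| < δ₀ → ‖Dd x‖ = 1)
    (hD2d : ∀ x, |sdist Ω x| < δ₀ →
      HasFDerivAt Dd (LinearMap.toContinuousLinearMap (Matrix.toEuclideanLin (D2d x))) x)
    (hD2dCont : ContinuousOn D2d {x | |sdist Ω x| < δ₀})
    (β B : ℝ) (hβlow : 1 / 2 < β) (hβhigh : β ≤ 1) (hB : 0 < B)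
    (hreg2 : ∀ x ∈ closure Ω, ∀ y ∈ closure Ω, ∀ α ∈ A,
      mnorm (σ x α - σ y α) ≤ B * ‖x - y‖ ^ β)
    (hirr : ∃ δ > (0 : ℝ), ∃ k > (0 : ℝ), ∃ γ : ℝ, γ < 2 * β - 1 ∧
      ∀ z ∈ frontier Ω, ∃ α₀ ∈ A, sigmaT (σ z α₀) (Dd z) = 0 ∧
        ∀ x ∈ Ω ∩ Metric.ball z δ,
          k * sdist Ω x ^ γ ≤
            ⟪b x α₀, Dd x⟫_ℝ + Matrix.trace (σ x α₀ * (σ x α₀)ᵀ * D2d x))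
    :
    ∀ κ > (0 : ℝ), ∀ M > (0 : ℝ), ∃ δ > (0 : ℝ), ∀ x ∈ Ω, sdist Ω x < δ →
      M ≤ sSup ((fun α =>
        κ * sdist Ω x ^ (-κ - 1) * ⟪b x α, Dd x⟫_ℝ
          + κ * sdist Ω x ^ (-κ - 1) * Matrix.trace (σ x α * (σ x α)ᵀ * D2d x)
          - κ * (κ + 1) * sdist Ω x ^ (-κ - 2) *
            (∑ i, sigmaT (σ x α) (Dd x) i ^ 2)) '' A) :=
  statement_11_general Ω hΩo hΩbdd A b σ hbBdd hσBdd δ₀ hδ₀ Dd D2d hDd hDdnorm hD2d hD2dCont β B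
    hβhigh hreg2 hirr
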